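/- arXiv:2605.24244 — 2 statements merged into one kernel-verified Lean document; each statement's English description precedes it below -/
import Mathlib

section
/- For any finite set of n distinct real vectors x_1,...,x_n in R^k and arbitrary scalar targets y_1,...,y_n in R, there exists a two-layer ReLU network with at most n hidden units that exactly interpolates all targets, i.e., f(x_i) = y_i for all i. -/
/-!
Project the points onto a direction `v` on which they stay distinct: such a direction exists
because a vector space over an infinite field is not a finite union of proper subspaces (here the
hyperplanes `v ⬝ᵥ (xᵢ - xⱼ) = 0`). This reduces the problem to interpolation at distinct reals
`t₁ < ⋯ < tₙ`, which is done by adding hinges one point at a time: a hinge `max 0 (t - θ)` with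
`θ` between the previous points and the new one vanishes on all previous points, so its slope can
be chosen to fix the value at the new point.
-/

open Function Finset Matrix

theorem Module.exists_dual_injective_comp {ι K M : Type*} [Field K] [Infinite K]
    [AddCommGroup M] [Module K M] [Finite ι] {x : ι → M} (hx : Function.Injective x) :
    ∃ f : Module.Dual K M, Function.Injective (f ∘ x) := by
  obtain ⟨f, hf⟩ := Module.exists_dual_forall_apply_ne_zero (K := K)
    (fun p : {p : ι × ι // p.1 ≠ p.2} ↦ x p.1.1 - x p.1.2) (fun p ↦ sub_ne_zero.mpr (hx.ne p.2))
  refine ⟨f, fun i j hij ↦ by_contra fun hne ↦ hf ⟨(i, j), hne⟩ ?_⟩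
  simpa [sub_eq_zero] using hij

theorem exists_dotProduct_injective {ι κ K : Type*} [Field K] [Infinite K] [Finite ι]
    [Fintype κ] [DecidableEq κ] {x : ι → κ → K} (hx : Injective x) :
    ∃ v : κ → K, Injective fun i ↦ v ⬝ᵥ x i := by
  obtain ⟨f, hf⟩ := Module.exists_dual_injective_comp (K := K) hx
  refine ⟨(dotProductEquiv K κ).symm f, ?_⟩
  convert hf using 2 with i
  simp only [Function.comp_apply]
  rw [← dotProductEquiv_apply_apply, LinearEquiv.apply_symm_apply]

theorem exists_relu_sum_eq_on_finset (s : Finset ℝ) (y : ℝ → ℝ) :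
    ∃ m ≤ s.card, ∃ (a b : Fin m → ℝ) (c : ℝ),
      ∀ t ∈ s, ∑ j, a j * max 0 (t + b j) + c = y t := by
  induction s using Finset.induction_on_max with
  | empty => exact ⟨0, le_rfl, Fin.elim0, Fin.elim0, 0, by simp⟩
  | insert p s hp ih =>
    obtain ⟨m, hm, a, b, c, h⟩ := ih
    obtain ⟨θ, hθp, hsθ⟩ : ∃ θ < p, ∀ t ∈ s, t ≤ θ := by
      rcases s.eq_empty_or_nonempty with rfl | hs
      · exact ⟨p - 1, by linarith, by simp⟩
      · exact ⟨s.max' hs, hp _ (s.max'_mem hs), s.le_max'⟩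
    set r := y p - (∑ j, a j * max 0 (p + b j) + c)
    refine ⟨m + 1, ?_, Fin.snoc a (r / (p - θ)), Fin.snoc b (-θ), c, fun t ht ↦ ?_⟩
    · rw [card_insert_of_notMem fun h ↦ (hp p h).false]
      omega
    simp only [Fin.sum_univ_castSucc, Fin.snoc_castSucc, Fin.snoc_last]
    rcases mem_insert.mp ht with rfl | hts
    · have : t - θ ≠ 0 := by linarith
      rw [max_eq_right (by linarith)]
      field_simp
      ring
    · rw [max_eq_left (by linarith [hsθ t hts]), mul_zero, add_zero]
      exact h t hts

theorem exists_relu_sum_eq {ι : Type*} [Fintype ι] {t : ι → ℝ} (ht : Injective t) (y : ι → ℝ) :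
    ∃ m ≤ Fintype.card ι, ∃ (a b : Fin m → ℝ) (c : ℝ),
      ∀ i, ∑ j, a j * max 0 (t i + b j) + c = y i := by
  classical
  obtain ⟨m, hm, a, b, c, h⟩ := exists_relu_sum_eq_on_finset (univ.image t) (extend t y 0)
  refine ⟨m, hm.trans card_image_le, a, b, c, fun i ↦ ?_⟩
  rw [h (t i) (mem_image_of_mem t (mem_univ i)), ht.extend_apply]

/-- Two-layer ReLU networks with at most `n` hidden units can interpolate
arbitrary scalar targets at `n` distinct points in `ℝ^k`. -/
theorem two_layer_relu_interpolation
    (k n : ℕ) (x : Fin n → (Fin k → ℝ)) (hx : Function.Injective x)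
    (y : Fin n → ℝ) :
    ∃ (m : ℕ), m ≤ n ∧
      ∃ (a : Fin m → ℝ) (w : Fin m → (Fin k → ℝ)) (b : Fin m → ℝ) (c : ℝ),
        ∀ i : Fin n,
          (∑ j : Fin m, a j * max 0 ((∑ l : Fin k, w j l * x i l) + b j)) + c
            = y i := by
  obtain ⟨v, hv⟩ := exists_dotProduct_injective hx
  obtain ⟨m, hm, a, b, c, h⟩ := exists_relu_sum_eq hv y
  exact ⟨m, by simpa using hm, a, fun _ ↦ v, b, c, h⟩
end

section
/- Let X be an n×p data matrix with rows x_i, and let the reconstruction map be x -> W2 W1 x for matrices W1 in R^{r×p}, W2 in R^{p×r} with r < p. The minimum over W1, W2 of sum_i ||x_i - W2 W1 x_i||^2 equals the minimum over rank-at-most-r matrices M of sum_i ||x_i - M x_i||^2, and is attained when W2 W1 is the orthogonal projection onto the span of the top r eigenvectors of X^T X. (Linear autoencoders recover the principal subspace.) -/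
/-!
Write `XᵀX = ∑ μ_a v_a v_aᵀ` with an orthonormal eigenbasis `v` and `μ_0 ≥ ⋯ ≥ μ_{p-1} ≥ 0`. The
reconstruction error of `M` is `trace ((1 - M) XᵀX (1 - M)ᵀ) = ∑ μ_a ‖v_a - M v_a‖²`. If
`rank M ≤ r`, the range `S` of `M` has dimension at most `r`, so `‖v_a - M v_a‖² ≥ 1 - c_a` with
`c_a = ‖proj_S v_a‖² ∈ [0, 1]` and `∑ c_a = dim S ≤ r`; comparing every `μ_a` with the threshold
`μ_r` gives `∑ μ_a (1 - c_a) ≥ ∑_{a ≥ r} μ_a`. The projection onto the top `r` eigenvectors attains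
this bound, and it factors as `Wᵀ W` through the `r × p` matrix `W` of those eigenvectors.
-/

open Matrix Finset Module

theorem Fin.sum_ite_val_lt {M : Type*} [AddCommMonoid M] {p r : ℕ} (h : r ≤ p) (f : Fin p → M) :
    ∑ a : Fin p, (if (a : ℕ) < r then f a else 0) = ∑ k : Fin r, f (Fin.castLE h k) := by
  rw [← Finset.sum_filter]
  have : univ.filter (fun a : Fin p => (a : ℕ) < r) = univ.map (Fin.castLEEmb h) := by
    ext a
    simp only [mem_filter, mem_univ, true_and, mem_map, Fin.castLEEmb_apply]
    exact ⟨fun ha => ⟨⟨a, ha⟩, rfl⟩, by rintro ⟨k, rfl⟩; exact k.isLt⟩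
  rw [this, Finset.sum_map]
  rfl

theorem Antitone.sum_ite_le_sum_mul_one_sub {p r : ℕ} (hr : r < p) {μ c : Fin p → ℝ}
    (hμ : Antitone μ) (hμr : 0 ≤ μ ⟨r, hr⟩) (hc0 : ∀ a, 0 ≤ c a) (hc1 : ∀ a, c a ≤ 1)
    (hc : ∑ a, c a ≤ r) :
    ∑ a : Fin p, (if (a : ℕ) < r then 0 else μ a) ≤ ∑ a, μ a * (1 - c a) := by
  set t := μ ⟨r, hr⟩
  have hpt (a : Fin p) : t * ((if (a : ℕ) < r then 1 else 0) - c a) ≤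
      μ a * (1 - c a) - (if (a : ℕ) < r then 0 else μ a) := by
    by_cases ha : (a : ℕ) < r
    · have : t ≤ μ a := hμ (Fin.le_def.mpr ha.le)
      simp only [ha, if_true]
      nlinarith [hc1 a]
    · have : μ a ≤ t := hμ (Fin.le_def.mpr (not_lt.mp ha))
      simp only [ha, if_false]
      nlinarith [hc0 a]
  have hsum := Finset.sum_le_sum fun a (_ : a ∈ univ) => hpt a
  rw [← Finset.mul_sum, Finset.sum_sub_distrib, Finset.sum_sub_distrib,
    Fin.sum_ite_val_lt hr.le (fun _ => (1 : ℝ))] at hsum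
  simp only [sum_const, card_univ, Fintype.card_fin, nsmul_eq_mul, mul_one] at hsum
  nlinarith

section Projection

variable {𝕜 E ι : Type*} [RCLike 𝕜] [NormedAddCommGroup E] [InnerProductSpace 𝕜 E] [Fintype ι]

theorem Submodule.norm_sq_sub_norm_sq_starProjection_le (S : Submodule 𝕜 E)
    [S.HasOrthogonalProjection] (x : E) {y : E} (hy : y ∈ S) :
    ‖x‖ ^ 2 - ‖S.starProjection x‖ ^ 2 ≤ ‖x - y‖ ^ 2 := by
  have hmin : ‖x - S.starProjection x‖ ≤ ‖x - y‖ := by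
    rw [Submodule.starProjection_minimal]
    exact ciInf_le ⟨0, by rintro _ ⟨z, rfl⟩; positivity⟩ (⟨y, hy⟩ : S)
  have hpyth := S.norm_sq_eq_add_norm_sq_starProjection x
  rw [S.starProjection_orthogonal', _root_.sub_apply, one_apply_eq_self] at hpyth
  nlinarith [norm_nonneg (x - S.starProjection x)]

open scoped InnerProductSpace in
theorem OrthonormalBasis.sum_norm_sq_starProjection [FiniteDimensional 𝕜 E]
    (b : OrthonormalBasis ι 𝕜 E) (S : Submodule 𝕜 E) :
    ∑ i, ‖S.starProjection (b i)‖ ^ 2 = finrank 𝕜 S := by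
  set w := stdOrthonormalBasis 𝕜 S
  have hproj (x : E) : ‖S.starProjection x‖ ^ 2 = ∑ k, ‖⟪(w k : E), x⟫_𝕜‖ ^ 2 := by
    rw [Submodule.starProjection_apply, Submodule.norm_coe,
      ← w.sum_sq_norm_inner_right (S.orthogonalProjectionOnto x)]
    simp only [Submodule.inner_orthogonalProjectionOnto_eq_of_mem_left]
  simp only [hproj]
  rw [Finset.sum_comm]
  simp [b.sum_sq_norm_inner_left, Submodule.norm_coe, w.norm_eq_one]

end Projection

theorem OrthonormalBasis.sum_ite_le_sum_mul_norm_sub_apply_sq {E : Type*} [NormedAddCommGroup E]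
    [InnerProductSpace ℝ E] [FiniteDimensional ℝ E] {p r : ℕ} (hr : r < p)
    (b : OrthonormalBasis (Fin p) ℝ E) {μ : Fin p → ℝ} (hμ : Antitone μ) (hμ0 : ∀ a, 0 ≤ μ a)
    (T : E →ₗ[ℝ] E) (hT : finrank ℝ (LinearMap.range T) ≤ r) :
    ∑ a : Fin p, (if (a : ℕ) < r then 0 else μ a) ≤ ∑ a, μ a * ‖b a - T (b a)‖ ^ 2 := by
  set S := LinearMap.range T
  set c := fun a => ‖S.starProjection (b a)‖ ^ 2
  have hc1 (a : Fin p) : c a ≤ 1 := by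
    simpa [c, b.norm_eq_one] using
      pow_le_pow_left₀ (norm_nonneg _) (S.norm_starProjection_apply_le (b a)) 2
  have hc : ∑ a, c a ≤ r := by
    rw [b.sum_norm_sq_starProjection S]
    exact_mod_cast hT
  calc ∑ a : Fin p, (if (a : ℕ) < r then 0 else μ a) ≤ ∑ a, μ a * (1 - c a) :=
        hμ.sum_ite_le_sum_mul_one_sub hr (hμ0 _) (fun a => by positivity) hc1 hc
    _ ≤ ∑ a, μ a * ‖b a - T (b a)‖ ^ 2 := by
        refine Finset.sum_le_sum fun a _ => mul_le_mul_of_nonneg_left ?_ (hμ0 a)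
        simpa [c, b.norm_eq_one] using
          S.norm_sq_sub_norm_sq_starProjection_le (b a) (LinearMap.mem_range_self T (b a))

section MatrixAlgebra

variable {R m ι : Type*}

theorem Matrix.trace_transpose_mul_diagonal_mul [Fintype m] [Fintype ι] [CommSemiring R]
    [DecidableEq m] (Z : Matrix m ι R) (c : m → R) :
    trace (Zᵀ * diagonal c * Z) = ∑ i, c i * ∑ j, Z i j ^ 2 := by
  simp only [trace, diag_apply, mul_apply, transpose_apply, diagonal_apply, Finset.mul_sum]
  rw [Finset.sum_comm]
  refine Finset.sum_congr rfl fun i _ => Finset.sum_congr rfl fun j _ => ?_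
  simp [Finset.sum_ite_eq', sq, mul_comm, mul_left_comm]

theorem Matrix.eq_transpose_mul_diagonal_mul_of_mulVec_eq [Fintype ι] [CommRing R] [DecidableEq ι]
    {A V : Matrix ι ι R} {μ : ι → R} (hV : V * Vᵀ = 1) (hAV : ∀ a, A *ᵥ V a = μ a • V a) :
    A = Vᵀ * diagonal μ * V := by
  have hAVt : A * Vᵀ = Vᵀ * diagonal μ := by
    ext j a
    rw [mul_diagonal]
    simpa [mul_apply, mulVec, dotProduct, mul_comm] using congrFun (hAV a) j
  calc A = A * (Vᵀ * V) := by rw [mul_eq_one_comm.mp hV, Matrix.mul_one]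
    _ = Vᵀ * diagonal μ * V := by rw [← Matrix.mul_assoc, hAVt]

theorem Matrix.mul_one_sub_transpose_mul_diagonal_mul_transpose [Fintype ι] [CommRing R]
    [DecidableEq ι] {V : Matrix ι ι R} (hV : V * Vᵀ = 1) (d : ι → R) :
    V * (1 - Vᵀ * diagonal d * V)ᵀ = V - diagonal d * V := by
  simp only [transpose_sub, transpose_one, transpose_mul, transpose_transpose, diagonal_transpose,
    Matrix.mul_sub, Matrix.mul_one, ← Matrix.mul_assoc, hV, Matrix.one_mul]

theorem Matrix.transpose_mul_diagonal_mul_eq_submatrix [CommSemiring R] {p r : ℕ} (h : r ≤ p)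
    (V : Matrix (Fin p) ι R) :
    Vᵀ * diagonal (fun a : Fin p => if (a : ℕ) < r then (1 : R) else 0) * V =
      (V.submatrix (Fin.castLE h) id)ᵀ * V.submatrix (Fin.castLE h) id := by
  ext i j
  simp only [mul_apply, transpose_apply, submatrix_apply, id_eq, diagonal_apply, mul_ite, mul_zero,
    Finset.sum_ite_eq', Finset.mem_univ, if_true]
  convert Fin.sum_ite_val_lt h (fun a => V a i * V a j) using 2 with a
  split_ifs <;> simp

theorem Matrix.rank_mul_le_inner_dim [Fintype ι] [CommSemiring R] [StrongRankCondition R] {k : ℕ}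
    (B : Matrix m (Fin k) R) (A : Matrix (Fin k) ι R) : (B * A).rank ≤ k :=
  (rank_mul_le_right B A).trans (A.rank_le_card_height.trans (Fintype.card_fin k).le)

end MatrixAlgebra

theorem Matrix.PosSemidef.exists_orthonormalBasis_antitone_eigenvalues {p : ℕ}
    {A : Matrix (Fin p) (Fin p) ℝ} (hA : A.PosSemidef) :
    ∃ (b : OrthonormalBasis (Fin p) ℝ (EuclideanSpace ℝ (Fin p))) (μ : Fin p → ℝ),
      Antitone μ ∧ (∀ a, 0 ≤ μ a) ∧ ∀ a, A *ᵥ ⇑(b a) = μ a • ⇑(b a) := by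
  have hT := Matrix.isPositive_toEuclideanLin_iff.mpr hA
  have hn : finrank ℝ (EuclideanSpace ℝ (Fin p)) = p := finrank_euclideanSpace_fin
  refine ⟨hT.isSymmetric.eigenvectorBasis hn, hT.isSymmetric.eigenvalues hn,
    hT.isSymmetric.eigenvalues_antitone hn, hT.nonneg_eigenvalues hn, fun a => ?_⟩
  have h := hT.isSymmetric.apply_eigenvectorBasis hn a
  rw [Matrix.toLpLin_apply] at h
  exact congrArg WithLp.ofLp h

theorem OrthonormalBasis.dotProduct_apply {ι : Type*} [Fintype ι] [DecidableEq ι]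
    (b : OrthonormalBasis ι ℝ (EuclideanSpace ℝ ι)) (a a' : ι) :
    ⇑(b a) ⬝ᵥ ⇑(b a') = if a = a' then 1 else 0 := by
  rw [← orthonormal_iff_ite.mp b.orthonormal a a', EuclideanSpace.inner_eq_star_dotProduct,
    dotProduct_comm]
  rfl

section ReconstructionError

variable {m ι : Type*} [Fintype m] [Fintype ι]

def reconstructionError (X : Matrix m ι ℝ) (M : Matrix ι ι ℝ) : ℝ :=
  ∑ i, ∑ j, (X i j - ∑ l, M j l * X i l) ^ 2

theorem reconstructionError_eq_trace [DecidableEq ι] (X : Matrix m ι ℝ) (M : Matrix ι ι ℝ) :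
    reconstructionError X M = trace ((1 - M) * (Xᵀ * X) * (1 - M)ᵀ) := by
  classical
  have h := trace_transpose_mul_diagonal_mul (X * (1 - M)ᵀ) 1
  simp only [Pi.one_apply, one_mul, Pi.one_def, diagonal_one, Matrix.mul_one, transpose_mul,
    transpose_transpose] at h
  rw [← Matrix.mul_assoc, Matrix.mul_assoc _ X, h, reconstructionError]
  refine Finset.sum_congr rfl fun i _ => Finset.sum_congr rfl fun j _ => ?_
  simp [mul_apply, mul_sub, one_apply, Finset.sum_sub_distrib, mul_comm]

variable [DecidableEq ι] {X : Matrix m ι ℝ} {V : Matrix ι ι ℝ} {μ : ι → ℝ}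

theorem reconstructionError_eq_sum_mul (hX : Xᵀ * X = Vᵀ * diagonal μ * V)
    (M : Matrix ι ι ℝ) :
    reconstructionError X M = ∑ a, μ a * ∑ j, (V * (1 - M)ᵀ : Matrix ι ι ℝ) a j ^ 2 := by
  rw [reconstructionError_eq_trace, hX, ← trace_transpose_mul_diagonal_mul]
  simp only [transpose_mul, transpose_transpose, Matrix.mul_assoc]

theorem reconstructionError_transpose_mul_diagonal_mul (hV : V * Vᵀ = 1)
    (hX : Xᵀ * X = Vᵀ * diagonal μ * V) (d : ι → ℝ) :
    reconstructionError X (Vᵀ * diagonal d * V) = ∑ a, μ a * (1 - d a) ^ 2 := by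
  rw [reconstructionError_eq_sum_mul hX, mul_one_sub_transpose_mul_diagonal_mul_transpose hV]
  refine Finset.sum_congr rfl fun a _ => ?_
  have hVa : ∑ j, V a j ^ 2 = 1 := by
    simpa [mul_apply, sq] using congrFun (congrFun hV a) a
  have hentry (j : ι) : (V - diagonal d * V) a j = (1 - d a) * V a j := by
    simp [diagonal_mul, sub_mul]
  simp only [hentry, mul_pow, ← Finset.mul_sum, hVa, mul_one]

end ReconstructionError

theorem sum_ite_le_reconstructionError {m : Type*} [Fintype m] {p r : ℕ} (hr : r < p)
    {X : Matrix m (Fin p) ℝ} (b : OrthonormalBasis (Fin p) ℝ (EuclideanSpace ℝ (Fin p)))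
    {μ : Fin p → ℝ} (hμ : Antitone μ) (hμ0 : ∀ a, 0 ≤ μ a)
    (hX : Xᵀ * X = (Matrix.of fun a => ⇑(b a))ᵀ * diagonal μ * Matrix.of fun a => ⇑(b a))
    {M : Matrix (Fin p) (Fin p) ℝ} (hM : M.rank ≤ r) :
    ∑ a : Fin p, (if (a : ℕ) < r then 0 else μ a) ≤ reconstructionError X M := by
  rw [reconstructionError_eq_sum_mul hX]
  convert b.sum_ite_le_sum_mul_norm_sub_apply_sq hr hμ hμ0 (toEuclideanLin M) ?_ using 3 with a
  · rw [EuclideanSpace.real_norm_sq_eq]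
    refine Finset.sum_congr rfl fun j _ => ?_
    simp [mul_apply, mulVec, dotProduct, mul_sub, one_apply, Finset.sum_sub_distrib, mul_comm (M _ _)]
  · rwa [toEuclideanLin_eq_toLin_orthonormal, ← rank_eq_finrank_range_toLin]

/-- Linear autoencoders recover the principal subspace: the minimum of the
reconstruction error over factorizations `W2 * W1` equals the minimum over
rank-at-most-`r` matrices, and both are attained at the orthogonal projection
onto the span of the top `r` eigenvectors of `Xᵀ X`. -/
theorem linear_autoencoder_pca
    (n p r : ℕ) (hr : r < p) (X : Matrix (Fin n) (Fin p) ℝ) :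
    ∃ (v : Fin p → (Fin p → ℝ)) (μ : Fin p → ℝ),
      -- `v` is an orthonormal family of eigenvectors of `Xᵀ X`
      (∀ a b : Fin p, ∑ l, v a l * v b l = if a = b then 1 else 0) ∧
      (∀ a : Fin p, (Xᵀ * X).mulVec (v a) = μ a • v a) ∧
      -- eigenvalues are sorted in decreasing order
      Antitone μ ∧
      -- `P` is the orthogonal projection onto the span of the top `r` eigenvectors
      ∀ P : Matrix (Fin p) (Fin p) ℝ,
        P = (fun a b => ∑ j : Fin p, if (j : ℕ) < r then v j a * v j b else 0) →
        IsLeast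
          {c : ℝ | ∃ (W1 : Matrix (Fin r) (Fin p) ℝ)
              (W2 : Matrix (Fin p) (Fin r) ℝ),
            c = ∑ i : Fin n, ∑ j : Fin p,
              (X i j - ∑ l : Fin p, (W2 * W1) j l * X i l) ^ 2}
          (∑ i : Fin n, ∑ j : Fin p,
            (X i j - ∑ l : Fin p, P j l * X i l) ^ 2) ∧
        IsLeast
          {c : ℝ | ∃ M : Matrix (Fin p) (Fin p) ℝ, M.rank ≤ r ∧
            c = ∑ i : Fin n, ∑ j : Fin p,
              (X i j - ∑ l : Fin p, M j l * X i l) ^ 2}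
          (∑ i : Fin n, ∑ j : Fin p,
            (X i j - ∑ l : Fin p, P j l * X i l) ^ 2) := by
  have hA : (Xᵀ * X).PosSemidef := by
    simpa [conjTranspose_eq_transpose_of_trivial] using posSemidef_conjTranspose_mul_self X
  obtain ⟨b, μ, hμ, hμ0, hbμ⟩ := hA.exists_orthonormalBasis_antitone_eigenvalues
  set V : Matrix (Fin p) (Fin p) ℝ := Matrix.of fun a => ⇑(b a)
  have hV : V * Vᵀ = 1 := Matrix.ext b.dotProduct_apply
  have hX := eq_transpose_mul_diagonal_mul_of_mulVec_eq hV hbμ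
  refine ⟨V, μ, b.dotProduct_apply, hbμ, hμ, fun P hP => ?_⟩
  have hPd : P = Vᵀ * diagonal (fun a : Fin p => if (a : ℕ) < r then (1 : ℝ) else 0) * V := by
    rw [hP]
    ext a a'
    simp [mul_apply, diagonal_apply]
  set W : Matrix (Fin r) (Fin p) ℝ := V.submatrix (Fin.castLE hr.le) id
  have hPW : P = Wᵀ * W := hPd.trans (transpose_mul_diagonal_mul_eq_submatrix hr.le V)
  have hmin (M : Matrix (Fin p) (Fin p) ℝ) (hM : M.rank ≤ r) :
      reconstructionError X P ≤ reconstructionError X M := by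
    refine le_of_eq_of_le ?_ (sum_ite_le_reconstructionError hr b hμ hμ0 hX hM)
    rw [hPd, reconstructionError_transpose_mul_diagonal_mul hV hX]
    refine Finset.sum_congr rfl fun a _ => ?_
    split_ifs <;> simp
  refine ⟨⟨⟨W, Wᵀ, by rw [hPW]⟩, ?_⟩, ⟨P, hPW ▸ rank_mul_le_inner_dim Wᵀ W, rfl⟩, ?_⟩
  · rintro _ ⟨W₁, W₂, rfl⟩
    exact hmin _ (rank_mul_le_inner_dim W₂ W₁)
  · rintro _ ⟨M, hM, rfl⟩
    exact hmin M hM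
end
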